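/- Radial kernel gradient formula: with K(x,y) = φ_σ(|x−y|²)I, φ_σ(r) = φ(r/σ), φ ∈ C¹(ℝ), the gradient of the functional dJ(X) = ∫_X S₁ : ∂X + S₀ · X dx in the associated vvRKHS is given pointwise by ∇^σ J(y) = ∫_X (φ_σ(|x−y|²) S₀(x) + (2/σ) φ'(|x−y|²/σ) S₁(x)(x−y)) dx. -/
import Mathlib


open scoped RealInnerProductSpace
open Matrix MeasureTheory

/-- Radial kernel gradient formula: for the radial kernel K(x,y) = φ(|x−y|²/σ)I,
the gradient of dJ(φ) = ∫_Ω S₁ : ∂φ + S₀ · φ dx in the associated vvRKHS is given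
pointwise by ∇^σJ(y) = ∫_Ω φ_σ(|x−y|²) S₀(x) + (2/σ) φ'(|x−y|²/σ) S₁(x)(x−y) dx. -/
theorem radial_kernel_shape_gradient_formula
    {d : ℕ} {H : Type*} [NormedAddCommGroup H] [InnerProductSpace ℝ H]
    (Ω : Set (Fin d → ℝ)) (hΩ : IsOpen Ω) (hΩb : Bornology.IsBounded Ω)
    (S1 : (Fin d → ℝ) → Matrix (Fin d) (Fin d) ℝ)
    (S0 : (Fin d → ℝ) → (Fin d → ℝ))
    (hS1 : ∀ i j, IntegrableOn (fun x => S1 x i j) Ω)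
    (hS0 : ∀ i, IntegrableOn (fun x => S0 x i) Ω)
    (σ : ℝ) (hσ : 0 < σ)
    (φ : ℝ → ℝ) (hφ : ContDiff ℝ 1 φ)
    (ev : H → (Fin d → ℝ) → (Fin d → ℝ))
    (Dev : H → (Fin d → ℝ) → Matrix (Fin d) (Fin d) ℝ)  -- Jacobians ∂
    (Ksec : (Fin d → ℝ) → (Fin d → ℝ) → H)
    -- the kernel sections of K(x,y) = φ_σ(|x−y|²)I :
    (hsec : ∀ (y a x : Fin d → ℝ),
      ev (Ksec y a) x = fun i => φ ((∑ l, (x l - y l) ^ 2) / σ) * a i)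
    (hsecD : ∀ (y a x : Fin d → ℝ) (i j : Fin d),
      Dev (Ksec y a) x i j =
        (2 / σ) * deriv φ ((∑ l, (x l - y l) ^ 2) / σ) * (x j - y j) * a i)
    (hrep : ∀ (y a : Fin d → ℝ) (f : H), ⟪Ksec y a, f⟫ = a ⬝ᵥ ev f y)
    (dJ : H →L[ℝ] ℝ)
    (hdJ : ∀ ψ : H, dJ ψ =
      ∫ x in Ω, (∑ i, ∑ j, S1 x i j * Dev ψ x i j) + ∑ i, S0 x i * ev ψ x i)
    (gradJ : H)
    (hgrad : ∀ ψ : H, ⟪gradJ, ψ⟫ = dJ ψ) :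
    ∀ (y : Fin d → ℝ) (i : Fin d),
      ev gradJ y i =
        ∫ x in Ω,
          φ ((∑ l, (x l - y l) ^ 2) / σ) * S0 x i
            + (2 / σ) * deriv φ ((∑ l, (x l - y l) ^ 2) / σ)
                * ∑ j, S1 x i j * (x j - y j) := by
  intro y i
  set a : Fin d → ℝ := Pi.single i 1 with ha
  have h2 := hrep y a gradJ
  rw [real_inner_comm, hgrad] at h2
  have h1 : ev gradJ y i = dJ (Ksec y a) := by
    rw [h2, ha]
    simp [dotProduct, Pi.single_apply]
  rw [h1, hdJ]
  congr 1
  funext x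
  have step : (∑ i', ∑ j, S1 x i' j * Dev (Ksec y a) x i' j)
      + ∑ i', S0 x i' * ev (Ksec y a) x i'
      = (∑ i', a i' * ((2/σ) * deriv φ ((∑ l, (x l - y l)^2)/σ)
            * ∑ j, S1 x i' j * (x j - y j)))
        + ∑ i', a i' * (φ ((∑ l, (x l - y l)^2)/σ) * S0 x i') := by
    rw [hsec]
    congr 1
    · exact Finset.sum_congr rfl fun i' _ => by
        rw [Finset.mul_sum, Finset.mul_sum]
        exact Finset.sum_congr rfl fun j _ => by rw [hsecD]; ring
    · exact Finset.sum_congr rfl fun i' _ => by ring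
  rw [step, ha]
  simp [Pi.single_apply, ite_mul, Finset.sum_ite_eq', add_comm]
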